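/- The bounded operators Z₁,…,Z_N on H = ℓ²((ℕ^ℓ) × ℤ) satisfy: Z_{j+1}* Z_{j+1} − Z_{j+1} Z_{j+1}* = (1 − q²)·Σ_{i=1}^{j} Z_i Z_i* for every j ∈ {1,…,ℓ}; Z₁* Z₁ = Z₁ Z₁*; and Σ_{i=1}^{N} Z_i Z_i* = 1 (the identity operator on H). -/

import Mathlib

/-!
Every generator is a weighted shift of the basis: `Z₁ e_(n,m) = c e_(n,m+1)` and, for `j ≥ 2`,
`Z_j e_(n,m) = c e_(n+δ_K,m)` with `K = ℓ + 2 - j`. For a weighted shift `T e_a = c_a e_(σ a)`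
with `σ` injective, `T* T` and `T T*` are diagonal, with eigenvalue `|c_a|²` at `e_a` and at
`e_(σ a)` respectively, and `T T*` vanishes off the range of `σ`. With
`w_t = q^(2(n_1 + ⋯ + n_t))` this gives `Z₁* Z₁ = Z₁ Z₁* = w_ℓ`, `Z_j Z_j* = w_(K-1) - w_K` and
`Z_j* Z_j = w_(K-1) - q² w_K`. Hence `Σ_(i ≤ j) Z_i Z_i*` telescopes to `w_(ℓ+1-j)`, which is
`1` for `j = N`, and `Z_(j+1)* Z_(j+1) - Z_(j+1) Z_(j+1)* = (1 - q²) w_(ℓ+1-j)`.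
-/

noncomputable section

/-- The Hilbert space `ℓ²((ℕ^ℓ) × ℤ)`. -/
abbrev Hsp (ℓ : ℕ) := lp (fun _ : (Fin ℓ → ℕ) × ℤ => ℂ) 2

/-- The standard orthonormal basis vector `e_{(n,m)}` of `ℓ²((ℕ^ℓ) × ℤ)`. -/
def eVec (ℓ : ℕ) (p : (Fin ℓ → ℕ) × ℤ) : Hsp ℓ := lp.single 2 p 1

open scoped InnerProductSpace ComplexConjugate lp

namespace lp

variable {𝕜 ι : Type*} [RCLike 𝕜] [DecidableEq ι]

theorem ext_single_one {F : Type*} [AddCommMonoid F] [Module 𝕜 F] [TopologicalSpace F]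
    [T2Space F] {f g : ℓ²(ι, 𝕜) →L[𝕜] F} (h : ∀ i, f (lp.single 2 i 1) = g (lp.single 2 i 1)) :
    f = g :=
  lp.ext_continuousLinearMap ENNReal.ofNat_ne_top fun i => ContinuousLinearMap.ext_ring (h i)

theorem inner_single_one_left (i : ι) (x : ℓ²(ι, 𝕜)) :
    ⟪lp.single 2 i (1 : 𝕜), x⟫_𝕜 = x i := by
  simp [lp.inner_single_left]

def IsWeightedShift (T : ℓ²(ι, 𝕜) →L[𝕜] ℓ²(ι, 𝕜)) (σ : ι → ι) (c : ι → 𝕜) : Prop :=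
  ∀ a, T (lp.single 2 a 1) = c a • lp.single 2 (σ a) 1

namespace IsWeightedShift

variable {T : ℓ²(ι, 𝕜) →L[𝕜] ℓ²(ι, 𝕜)} {σ : ι → ι} {c : ι → 𝕜}

theorem adjoint_apply_single_apply (hT : IsWeightedShift T σ c) (a b : ι) :
    T.adjoint (lp.single 2 b 1) a = if σ a = b then conj (c a) else 0 := by
  rw [← inner_single_one_left, ContinuousLinearMap.adjoint_inner_right, hT, inner_smul_left,
    inner_single_one_left, lp.single_apply, Pi.single_apply]
  split_ifs <;> simp

theorem adjoint_apply_single_map (hT : IsWeightedShift T σ c) (hσ : σ.Injective) (a : ι) :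
    T.adjoint (lp.single 2 (σ a) 1) = conj (c a) • lp.single 2 a 1 := by
  ext a'
  rw [hT.adjoint_apply_single_apply, lp.coeFn_smul, Pi.smul_apply, lp.single_apply,
    Pi.single_apply]
  by_cases h : a' = a
  · simp [h]
  · simp [h, hσ.ne h]

theorem adjoint_apply_single_of_notMem_range (hT : IsWeightedShift T σ c) {b : ι}
    (hb : b ∉ Set.range σ) : T.adjoint (lp.single 2 b 1) = 0 := by
  ext a
  rw [hT.adjoint_apply_single_apply, if_neg fun h => hb ⟨a, h⟩]
  rfl

theorem adjoint_comp_apply_single (hT : IsWeightedShift T σ c) (hσ : σ.Injective) (a : ι) :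
    (T.adjoint ∘L T) (lp.single 2 a 1) = ((‖c a‖ ^ 2 : ℝ) : 𝕜) • lp.single 2 a 1 := by
  rw [ContinuousLinearMap.comp_apply, hT, map_smul, hT.adjoint_apply_single_map hσ, smul_smul,
    RCLike.mul_conj]
  norm_cast

theorem comp_adjoint_apply_single (hT : IsWeightedShift T σ c) (hσ : σ.Injective)
    {d : ι → 𝕜} (hd : ∀ a, d (σ a) = ((‖c a‖ ^ 2 : ℝ) : 𝕜))
    (hd₀ : ∀ b ∉ Set.range σ, d b = 0) (b : ι) :
    (T ∘L T.adjoint) (lp.single 2 b 1) = d b • lp.single 2 b 1 := by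
  by_cases hb : b ∈ Set.range σ
  · obtain ⟨a, rfl⟩ := hb
    rw [ContinuousLinearMap.comp_apply, hT.adjoint_apply_single_map hσ, map_smul, hT, smul_smul,
      RCLike.conj_mul, hd]
    norm_cast
  · rw [ContinuousLinearMap.comp_apply, hT.adjoint_apply_single_of_notMem_range hb, map_zero,
      hd₀ b hb, zero_smul]

end IsWeightedShift

end lp

theorem Fin.sum_filter_val_le_eq_sum_range {M : Type*} [AddCommMonoid M] (f : ℕ → M) {ℓ j : ℕ}
    (hj : j ≤ ℓ) :
    ∑ i ∈ Finset.univ.filter (fun i : Fin (ℓ + 1) => (i : ℕ) ≤ j), f i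
      = ∑ i ∈ Finset.range (j + 1), f i := by
  rw [Finset.sum_filter, Fin.sum_univ_eq_sum_range (fun i => if i ≤ j then f i else 0),
    ← Finset.sum_filter]
  congr 1
  ext i
  simp only [Finset.mem_filter, Finset.mem_range]
  omega

namespace VaksmanSoibelman

variable {ℓ : ℕ}

theorem ext_eVec {A B : Hsp ℓ →L[ℂ] Hsp ℓ}
    (h : ∀ (n : Fin ℓ → ℕ) (m : ℤ), A (eVec ℓ (n, m)) = B (eVec ℓ (n, m))) : A = B :=
  lp.ext_single_one fun p => h p.1 p.2

def partialSum (n : Fin ℓ → ℕ) (t : ℕ) : ℕ :=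
  ∑ i ∈ Finset.univ.filter (fun i : Fin ℓ => (i : ℕ) < t), n i

theorem partialSum_zero (n : Fin ℓ → ℕ) : partialSum n 0 = 0 := by
  simp [partialSum]

theorem partialSum_self (n : Fin ℓ → ℕ) : partialSum n ℓ = ∑ i, n i := by
  rw [partialSum, Finset.filter_true_of_mem fun i _ => i.isLt]

theorem partialSum_succ (n : Fin ℓ → ℕ) (k : Fin ℓ) :
    partialSum n (k + 1) = partialSum n k + n k := by
  have h : Finset.univ.filter (fun i : Fin ℓ => (i : ℕ) < k + 1)
      = insert k (Finset.univ.filter (fun i : Fin ℓ => (i : ℕ) < k)) := by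
    ext i
    simp only [Finset.mem_filter, Finset.mem_insert, Finset.mem_univ, true_and, Fin.ext_iff]
    omega
  rw [partialSum, partialSum, h, Finset.sum_insert (by simp), add_comm]

theorem partialSum_update_of_le (n : Fin ℓ → ℕ) {k : Fin ℓ} {t : ℕ} (ht : t ≤ k) (v : ℕ) :
    partialSum (Function.update n k v) t = partialSum n t :=
  Finset.sum_congr rfl fun i hi =>
    Function.update_of_ne (by rintro rfl; exact absurd (Finset.mem_filter.1 hi).2 ht.not_gt) _ _

/-- `w_t = q^(2(n_1 + ⋯ + n_t))`, with the coordinates of `n` numbered from `0`. -/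
def weight (q : ℝ) (n : Fin ℓ → ℕ) (t : ℕ) : ℝ :=
  q ^ (2 * partialSum n t)

theorem weight_zero (q : ℝ) (n : Fin ℓ → ℕ) : weight q n 0 = 1 := by
  rw [weight, partialSum_zero, mul_zero, pow_zero]

theorem weight_succ (q : ℝ) (n : Fin ℓ → ℕ) (k : Fin ℓ) :
    weight q n (k + 1) = weight q n k * q ^ (2 * n k) := by
  rw [weight, weight, partialSum_succ, mul_add, pow_add]

def IsTranslationGenerator (q : ℝ) (T : Hsp ℓ →L[ℂ] Hsp ℓ) : Prop :=
  ∀ (n : Fin ℓ → ℕ) (m : ℤ), T (eVec ℓ (n, m)) = ((q : ℂ) ^ (∑ i, n i)) • eVec ℓ (n, m + 1)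

def IsRaisingGenerator (q : ℝ) (k : Fin ℓ) (T : Hsp ℓ →L[ℂ] Hsp ℓ) : Prop :=
  ∀ (n : Fin ℓ → ℕ) (m : ℤ), T (eVec ℓ (n, m))
    = ((q ^ partialSum n k * √(1 - q ^ (2 * (n k + 1))) : ℝ) : ℂ)
      • eVec ℓ (Function.update n k (n k + 1), m)

namespace IsTranslationGenerator

variable {q : ℝ} {T : Hsp ℓ →L[ℂ] Hsp ℓ}

theorem isWeightedShift (hT : IsTranslationGenerator q T) :
    lp.IsWeightedShift T (fun p => (p.1, p.2 + 1)) fun p => (q : ℂ) ^ (∑ i, p.1 i) :=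
  fun p => hT p.1 p.2

theorem injective_translate : Function.Injective fun p : (Fin ℓ → ℕ) × ℤ => (p.1, p.2 + 1) := by
  rintro ⟨n, m⟩ ⟨n', m'⟩ h
  simp_all

theorem norm_coeff_sq (q : ℝ) (n : Fin ℓ → ℕ) : ‖(q : ℂ) ^ (∑ i, n i)‖ ^ 2 = weight q n ℓ := by
  rw [weight, partialSum_self, norm_pow, Complex.norm_real, Real.norm_eq_abs, ← pow_mul,
    mul_comm, pow_mul, sq_abs, ← pow_mul]

theorem adjoint_comp_apply (hT : IsTranslationGenerator q T) (n : Fin ℓ → ℕ) (m : ℤ) :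
    (T.adjoint ∘L T) (eVec ℓ (n, m)) = (weight q n ℓ : ℂ) • eVec ℓ (n, m) := by
  rw [eVec, hT.isWeightedShift.adjoint_comp_apply_single injective_translate, norm_coeff_sq]
  rfl

theorem comp_adjoint_apply (hT : IsTranslationGenerator q T) (n : Fin ℓ → ℕ) (m : ℤ) :
    (T ∘L T.adjoint) (eVec ℓ (n, m)) = (weight q n ℓ : ℂ) • eVec ℓ (n, m) :=
  hT.isWeightedShift.comp_adjoint_apply_single injective_translate
    (d := fun p => (weight q p.1 ℓ : ℂ)) (fun p => congrArg _ (norm_coeff_sq q p.1).symm)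
    (fun b hb => (hb ⟨(b.1, b.2 - 1), by simp⟩).elim) (n, m)

end IsTranslationGenerator

namespace IsRaisingGenerator

variable {q : ℝ} {k : Fin ℓ} {T : Hsp ℓ →L[ℂ] Hsp ℓ}

theorem isWeightedShift (hT : IsRaisingGenerator q k T) :
    lp.IsWeightedShift T (fun p => (Function.update p.1 k (p.1 k + 1), p.2))
      fun p => ((q ^ partialSum p.1 k * √(1 - q ^ (2 * (p.1 k + 1))) : ℝ) : ℂ) :=
  fun p => hT p.1 p.2

theorem injective_raise (k : Fin ℓ) :
    Function.Injective fun p : (Fin ℓ → ℕ) × ℤ => (Function.update p.1 k (p.1 k + 1), p.2) := by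
  rintro ⟨n, m⟩ ⟨n', m'⟩ h
  simp only [Prod.mk.injEq] at h ⊢
  refine ⟨funext fun i => ?_, h.2⟩
  have hk := congrFun h.1 k
  have hi := congrFun h.1 i
  simp only [Function.update_self] at hk
  by_cases hik : i = k
  · subst hik; omega
  · simpa [Function.update_of_ne hik] using hi

theorem norm_coeff_sq (hq : |q| ≤ 1) (n : Fin ℓ → ℕ) (e : ℕ) :
    ‖((q ^ partialSum n k * √(1 - q ^ (2 * e)) : ℝ) : ℂ)‖ ^ 2
      = weight q n k * (1 - q ^ (2 * e)) := by
  have h : q ^ (2 * e) ≤ 1 := by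
    rw [pow_mul]
    exact pow_le_one₀ (sq_nonneg q) ((sq_le_one_iff_abs_le_one q).2 hq)
  rw [Complex.norm_real, Real.norm_eq_abs, sq_abs, mul_pow, Real.sq_sqrt (by linarith), weight,
    pow_mul, ← pow_mul, mul_comm (partialSum n k)]

theorem adjoint_comp_apply (hq : |q| ≤ 1) (hT : IsRaisingGenerator q k T) (n : Fin ℓ → ℕ)
    (m : ℤ) :
    (T.adjoint ∘L T) (eVec ℓ (n, m))
      = ((weight q n k - q ^ 2 * weight q n (k + 1) : ℝ) : ℂ) • eVec ℓ (n, m) := by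
  rw [eVec, hT.isWeightedShift.adjoint_comp_apply_single (injective_raise k), norm_coeff_sq hq,
    weight_succ, RCLike.ofReal_eq_complex_ofReal]
  congr 2
  ring

theorem comp_adjoint_apply (hq : |q| ≤ 1) (hT : IsRaisingGenerator q k T) (n : Fin ℓ → ℕ)
    (m : ℤ) :
    (T ∘L T.adjoint) (eVec ℓ (n, m))
      = ((weight q n k - weight q n (k + 1) : ℝ) : ℂ) • eVec ℓ (n, m) := by
  have hd (n : Fin ℓ → ℕ) :
      weight q n k - weight q n (k + 1) = weight q n k * (1 - q ^ (2 * n k)) := by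
    rw [weight_succ]
    ring
  refine hT.isWeightedShift.comp_adjoint_apply_single (injective_raise k)
    (d := fun p => ((weight q p.1 k - weight q p.1 (k + 1) : ℝ) : ℂ)) (fun ⟨n, m⟩ => ?_)
    (fun ⟨n, m⟩ hb => ?_) (n, m)
  · dsimp only
    rw [norm_coeff_sq hq, hd, weight, weight, partialSum_update_of_le n le_rfl,
      Function.update_self]
    rfl
  · have hn : n k = 0 := by
      by_contra hn
      refine hb ⟨(Function.update n k (n k - 1), m), ?_⟩
      simp [Nat.sub_add_cancel (Nat.pos_of_ne_zero hn)]
    dsimp only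
    rw [hd, hn, mul_zero, pow_zero, sub_self, mul_zero, Complex.ofReal_zero]

end IsRaisingGenerator

variable {q : ℝ} {Z : Fin (ℓ + 1) → (Hsp ℓ →L[ℂ] Hsp ℓ)}

theorem sum_comp_adjoint_apply (hq : |q| ≤ 1) (hZ0 : IsTranslationGenerator q (Z 0))
    (hZ : ∀ (j : Fin (ℓ + 1)) (hj : 1 ≤ (j : ℕ)), IsRaisingGenerator q ⟨ℓ - j, by omega⟩ (Z j))
    {j : ℕ} (hj : j ≤ ℓ) (n : Fin ℓ → ℕ) (m : ℤ) :
    (∑ i ∈ Finset.univ.filter (fun i : Fin (ℓ + 1) => (i : ℕ) ≤ j), Z i ∘L (Z i).adjoint)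
        (eVec ℓ (n, m))
      = (weight q n (ℓ - j) : ℂ) • eVec ℓ (n, m) := by
  set u : ℕ → ℝ := fun i => weight q n (ℓ - i)
  have hZZ (i : Fin (ℓ + 1)) : (Z i ∘L (Z i).adjoint) (eVec ℓ (n, m))
      = ((if (i : ℕ) = 0 then u 0 else u i - u (i - 1) : ℝ) : ℂ) • eVec ℓ (n, m) := by
    by_cases hi : (i : ℕ) = 0
    · rw [if_pos hi, (Fin.ext hi : i = 0), hZ0.comp_adjoint_apply]
      rfl
    · rw [if_neg hi, (hZ i (by omega)).comp_adjoint_apply hq,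
        show ℓ - (i : ℕ) + 1 = ℓ - (i - 1) by omega]
  rw [sum_apply, Finset.sum_congr rfl fun i _ => hZZ i, ← Finset.sum_smul, ← Complex.ofReal_sum,
    Fin.sum_filter_val_le_eq_sum_range (fun i => if i = 0 then u 0 else u i - u (i - 1)) hj,
    ← Finset.eq_sum_range_sub' u]

end VaksmanSoibelman

open VaksmanSoibelman

/-- The operators `Z₁,…,Z_N` on `ℓ²((ℕ^ℓ) × ℤ)` satisfy
`Z_{j+1}* Z_{j+1} − Z_{j+1} Z_{j+1}* = (1−q²) Σ_{i=1}^{j} Z_i Z_i*` for `j ∈ {1,…,ℓ}`,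
`Z₁* Z₁ = Z₁ Z₁*`, and `Σ_{i=1}^{N} Z_i Z_i* = 1`.
(The indices of `Z` and `n` are shifted to start at `0`.) -/
theorem sphere_operator_relations
    (q : ℝ) (hq : q ∈ Set.Ioo (0 : ℝ) 1) (ℓ : ℕ)
    (Z : Fin (ℓ + 1) → (Hsp ℓ →L[ℂ] Hsp ℓ))
    (hZ0 : ∀ (n : Fin ℓ → ℕ) (m : ℤ),
      Z 0 (eVec ℓ (n, m)) = ((q : ℂ) ^ (∑ i, n i)) • eVec ℓ (n, m + 1))
    (hZj : ∀ (j : Fin (ℓ + 1)) (hj : 1 ≤ (j : ℕ)) (n : Fin ℓ → ℕ) (m : ℤ),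
      Z j (eVec ℓ (n, m))
        = (((q : ℂ) ^ (∑ i ∈ Finset.univ.filter (fun i : Fin ℓ => (i : ℕ) < ℓ - (j : ℕ)), n i))
            * ((Real.sqrt (1 - q ^ (2 * (n ⟨ℓ - (j : ℕ), by have := j.isLt; omega⟩ + 1))) : ℝ) : ℂ))
          • eVec ℓ (Function.update n ⟨ℓ - (j : ℕ), by have := j.isLt; omega⟩
              (n ⟨ℓ - (j : ℕ), by have := j.isLt; omega⟩ + 1), m)) :
    (∀ j : Fin ℓ,
      ContinuousLinearMap.adjoint (Z j.succ) ∘L Z j.succ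
          - Z j.succ ∘L ContinuousLinearMap.adjoint (Z j.succ)
        = (1 - (q : ℂ) ^ 2) •
            ∑ i ∈ Finset.univ.filter (fun i : Fin (ℓ + 1) => (i : ℕ) ≤ (j : ℕ)),
              Z i ∘L ContinuousLinearMap.adjoint (Z i)) ∧
    (ContinuousLinearMap.adjoint (Z 0) ∘L Z 0 = Z 0 ∘L ContinuousLinearMap.adjoint (Z 0)) ∧
    (∑ i : Fin (ℓ + 1), Z i ∘L ContinuousLinearMap.adjoint (Z i) = 1) := by
  have hq' : |q| ≤ 1 := abs_le.2 ⟨by linarith [hq.1], hq.2.le⟩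
  replace hZ0 : IsTranslationGenerator q (Z 0) := hZ0
  have hZ (j : Fin (ℓ + 1)) (hj : 1 ≤ (j : ℕ)) :
      IsRaisingGenerator q ⟨ℓ - j, by omega⟩ (Z j) := fun n m => by
    rw [hZj j hj n m, partialSum]
    push_cast
    rfl
  refine ⟨fun j => ext_eVec fun n m => ?_, ext_eVec fun n m => ?_, ext_eVec fun n m => ?_⟩
  · have hk : ℓ - (j.succ : ℕ) + 1 = ℓ - j := by rw [Fin.val_succ]; omega
    rw [sub_apply, (hZ j.succ j.succ_pos).adjoint_comp_apply hq',
      (hZ j.succ j.succ_pos).comp_adjoint_apply hq', smul_apply,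
      sum_comp_adjoint_apply hq' hZ0 hZ j.is_lt.le, ← sub_smul, smul_smul, hk]
    congr 1
    push_cast
    ring
  · rw [hZ0.adjoint_comp_apply, hZ0.comp_adjoint_apply]
  · rw [one_apply_eq_self, ← Finset.filter_true_of_mem (s := Finset.univ)
      fun (i : Fin (ℓ + 1)) _ => Nat.lt_succ_iff.1 i.isLt, sum_comp_adjoint_apply hq' hZ0 hZ le_rfl,
      Nat.sub_self, weight_zero, Complex.ofReal_one, one_smul]

end
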